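/- (Section 4.2: a diagonal viscosity matrix yields the wrong boundary condition for a linear system.) Let M be the 2×2 real matrix with rows (−1, 1) and (−3, 3), and let c ∈ ℝ². If v : [0,∞) → ℝ² is differentiable with v'(y) = M·(v(y) − c) for all y ≥ 0 and v(y) → c as y → ∞, then v(0) = c (indeed v(y) = c for all y ≥ 0). -/

import Mathlib

/-!
Along the left eigenvectors `(3, -1)` and `(1, -1)` of `M`, for the eigenvalues `0` and `2`,
the deviation `w = v - c` evolves by the scalar equations `f' = μ f` with `μ ≥ 0`. Then
`exp (-μ y) f y` is constant and tends to `0`, so `f ≡ 0`; as the two eigenvectors span the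
dual of `ℝ²`, this forces `w ≡ 0`.
-/

open Filter Matrix Topology

lemma eq_const_of_hasDerivAt_zero_on_Ici {f : ℝ → ℝ} (hf : ∀ x, 0 ≤ x → HasDerivAt f 0 x)
    {y : ℝ} (hy : 0 ≤ y) : f y = f 0 :=
  constant_of_has_deriv_right_zero (fun x hx => (hf x hx.1).continuousAt.continuousWithinAt)
    (fun x hx => (hf x hx.1).hasDerivWithinAt) y ⟨hy, le_rfl⟩

lemma eq_zero_of_hasDerivAt_mul_self_of_tendsto_zero {f : ℝ → ℝ} {μ : ℝ} (hμ : 0 ≤ μ)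
    (hf : ∀ x, 0 ≤ x → HasDerivAt f (μ * f x) x) (hlim : Tendsto f atTop (𝓝 0))
    {y : ℝ} (hy : 0 ≤ y) : f y = 0 := by
  set g : ℝ → ℝ := fun x => Real.exp (-(μ * x)) * f x
  have hg_deriv : ∀ x, 0 ≤ x → HasDerivAt g 0 x := by
    intro x hx
    have hexp : HasDerivAt (fun x => Real.exp (-(μ * x))) (Real.exp (-(μ * x)) * -μ) x := by
      simpa using ((hasDerivAt_id x).const_mul μ).neg.exp
    exact (hexp.mul (hf x hx)).congr_deriv (by ring)
  have hg_lim : Tendsto g atTop (𝓝 0) := by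
    refine (hlim.zero_mul_isBoundedUnder_le ?_).congr fun x => mul_comm _ _
    refine ⟨1, eventually_map.2 ((eventually_ge_atTop 0).mono fun x hx => ?_)⟩
    show ‖Real.exp _‖ ≤ 1
    rw [Real.norm_eq_abs, abs_of_pos (Real.exp_pos _), Real.exp_le_one_iff]
    nlinarith
  have hg0 : g 0 = 0 :=
    tendsto_nhds_unique (tendsto_const_nhds.congr' ((eventually_ge_atTop 0).mono
      fun x hx => (eq_const_of_hasDerivAt_zero_on_Ici hg_deriv hx).symm)) hg_lim
  have hgy : g y = 0 := (eq_const_of_hasDerivAt_zero_on_Ici hg_deriv hy).trans hg0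
  exact (mul_eq_zero.1 hgy).resolve_left (Real.exp_ne_zero _)

lemma hasDerivAt_dotProduct_const {ι : Type*} [Fintype ι] (ℓ : ι → ℝ) {w : ℝ → ι → ℝ}
    {w' : ι → ℝ} {x : ℝ} (hw : HasDerivAt w w' x) :
    HasDerivAt (fun y => ℓ ⬝ᵥ w y) (ℓ ⬝ᵥ w') x := by
  simpa [dotProduct] using HasDerivAt.fun_sum fun i _ => (hasDerivAt_pi.1 hw i).const_mul (ℓ i)

lemma dotProduct_eq_zero_of_vecMul_eq_smul {ι : Type*} [Fintype ι] {M : Matrix ι ι ℝ}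
    {ℓ : ι → ℝ} {μ : ℝ} (hμ : 0 ≤ μ) (hℓ : ℓ ᵥ* M = μ • ℓ) {w : ℝ → ι → ℝ}
    (hw : ∀ x, 0 ≤ x → HasDerivAt w (M *ᵥ w x) x) (hlim : Tendsto w atTop (𝓝 0))
    {y : ℝ} (hy : 0 ≤ y) : ℓ ⬝ᵥ w y = 0 := by
  refine eq_zero_of_hasDerivAt_mul_self_of_tendsto_zero (f := fun x => ℓ ⬝ᵥ w x) hμ
    (fun x hx => ?_) ?_ hy
  · convert hasDerivAt_dotProduct_const ℓ (hw x hx) using 1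
    rw [dotProduct_mulVec, hℓ, smul_dotProduct, smul_eq_mul]
  · simpa [Function.comp_def] using
      ((continuous_const.dotProduct continuous_id).tendsto 0).comp hlim

theorem diagonal_viscosity_forces_full_dirichlet
    (M : Matrix (Fin 2) (Fin 2) ℝ) (hM : M = !![(-1 : ℝ), 1; -3, 3])
    (c : Fin 2 → ℝ) (v : ℝ → Fin 2 → ℝ)
    (hv : ∀ y : ℝ, 0 ≤ y → HasDerivAt v (M.mulVec (v y - c)) y)
    (hlim : Tendsto v atTop (nhds c)) :
    v 0 = c ∧ ∀ y : ℝ, 0 ≤ y → v y = c := by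
  set w : ℝ → Fin 2 → ℝ := fun y => v y - c
  have hw : ∀ x, 0 ≤ x → HasDerivAt w (M *ᵥ w x) x := fun x hx => (hv x hx).sub_const c
  have hw_lim : Tendsto w atTop (𝓝 0) := by simpa using hlim.sub_const c
  have hℓ₀ : ![3, -1] ᵥ* M = (0 : ℝ) • ![3, -1] := by
    subst hM; ext i; fin_cases i <;> norm_num [vecMul]
  have hℓ₂ : ![1, -1] ᵥ* M = (2 : ℝ) • ![1, -1] := by
    subst hM; ext i; fin_cases i <;> norm_num [vecMul]
  have hv_eq_c : ∀ y, 0 ≤ y → v y = c := by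
    intro y hy
    have ha := dotProduct_eq_zero_of_vecMul_eq_smul le_rfl hℓ₀ hw hw_lim hy
    have hb := dotProduct_eq_zero_of_vecMul_eq_smul zero_le_two hℓ₂ hw hw_lim hy
    simp only [w, dotProduct, Fin.sum_univ_two, Pi.sub_apply, cons_val_zero, cons_val_one] at ha hb
    ext i; fin_cases i <;> simp <;> linarith
  exact ⟨hv_eq_c 0 le_rfl, hv_eq_c⟩
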